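/- arXiv:1911.02911 — 4 statements merged into one kernel-verified Lean document; each statement's English description precedes it below -/
import Mathlib

section
/- Let (S,F) be a maximization problem with a linear programming formulation of size R, let f ∈ F, and suppose the formulation certifies the upper bound c on f, i.e. the maximum of ⟨w^f, y⟩ over the (nonempty) polytope {y : Ay ≤ β} is attained and is at most c. Then there exist nonnegative reals p₀,…,p_R ≥ 0 and nonnegative functions q₀,…,q_R : S → ℝ≥0 such that c - f(s) = Σ_{i=0}^{R} p_i q_i(s) for all s ∈ S; moreover the functions q_i can be chosen independently of f, so that for every f ∈ F on which the formulation certifies an upper bound c_f there are nonnegative reals p_i(f) with c_f - f(s) = Σ_{i=0}^{R} p_i(f) q_i(s) for all s ∈ S. -/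
/-!
By the affine Farkas lemma, a bound `c` on `w ⬝ᵥ v` over a nonempty polyhedron `A v ≤ b` is
certified by multipliers `y ≥ 0` with `y ᵥ* A = w` and `y ⬝ᵥ b ≤ c`. Evaluated at the point `pt s`
of a solution this reads `c - f s = (c - y ⬝ᵥ b) + ∑ i, y i * (b - A *ᵥ pt s) i`, so one can take
`q₀ = 1` and `q_{i+1}` the slack of the `i`-th constraint, which does not depend on `f`.
Farkas' lemma follows by separating `(w, c)` from the cone generated by the `(A i, b i)` and
`(0, 1)`; this cone is closed since, by conic Carathéodory, it is a finite union of cones with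
linearly independent generators.
-/

open Filter Matrix Topology

section ConicCaratheodory

variable {E : Type*} [AddCommGroup E] [Module ℝ E] {ι : Type*} [DecidableEq ι] {v : ι → E}

theorem exists_nonneg_sum_erase_eq_of_not_linearIndepOn {s : Finset ι} {c : ι → ℝ}
    (hs : ¬LinearIndepOn ℝ v s) (hc : ∀ i ∈ s, 0 ≤ c i) :
    ∃ j ∈ s, ∃ c' : ι → ℝ, (∀ i ∈ s.erase j, 0 ≤ c' i) ∧
      ∑ i ∈ s.erase j, c' i • v i = ∑ i ∈ s, c i • v i := by
  obtain ⟨g, hg, hneg⟩ : ∃ g : ι → ℝ, ∑ i ∈ s, g i • v i = 0 ∧ ∃ i ∈ s, g i < 0 := by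
    obtain ⟨g, hg, i, hi, hgi⟩ := not_linearIndepOn_finset_iff.1 hs
    rcases hgi.lt_or_gt with hgi | hgi
    · exact ⟨g, hg, i, hi, hgi⟩
    · exact ⟨-g, by simp [neg_smul, hg], i, hi, by simpa using hgi⟩
  set N := s.filter (g · < 0)
  have hN : N.Nonempty := by
    obtain ⟨i, hi, hgi⟩ := hneg
    exact ⟨i, Finset.mem_filter.2 ⟨hi, hgi⟩⟩
  obtain ⟨j, hjN, hjmin⟩ := N.exists_min_image (fun i => c i / -g i) hN
  obtain ⟨hjs, hgj⟩ := Finset.mem_filter.1 hjN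
  -- shift `c` along the dependency `g` until its first coefficient on `s` vanishes
  set τ := c j / -g j
  refine ⟨j, hjs, c + τ • g, fun i hi => ?_, ?_⟩
  · have his := Finset.mem_of_mem_erase hi
    by_cases hgi : g i < 0
    · have := (le_div_iff₀ (neg_pos.2 hgi)).1 (hjmin i (Finset.mem_filter.2 ⟨his, hgi⟩))
      simp only [Pi.add_apply, Pi.smul_apply, smul_eq_mul]
      linarith
    · have hτ : 0 ≤ τ := div_nonneg (hc j hjs) (neg_nonneg.2 hgj.le)
      exact add_nonneg (hc i his) (mul_nonneg hτ (not_lt.1 hgi))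
  · have hj0 : (c + τ • g) j = 0 := by
      simp only [Pi.add_apply, Pi.smul_apply, smul_eq_mul, τ]
      field_simp [hgj.ne]
      ring
    rw [Finset.sum_erase s (by rw [hj0, zero_smul])]
    simp only [Pi.add_apply, Pi.smul_apply, add_smul, smul_assoc, Finset.sum_add_distrib,
      ← Finset.smul_sum, hg, smul_zero, add_zero]

theorem exists_linearIndepOn_nonneg_sum_eq (s : Finset ι) {c : ι → ℝ} (hc : ∀ i ∈ s, 0 ≤ c i) :
    ∃ t ⊆ s, LinearIndepOn ℝ v t ∧ ∃ c' : ι → ℝ, (∀ i ∈ t, 0 ≤ c' i) ∧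
      ∑ i ∈ t, c' i • v i = ∑ i ∈ s, c i • v i := by
  induction s using Finset.strongInduction generalizing c with
  | _ s ih =>
    by_cases hs : LinearIndepOn ℝ v s
    · exact ⟨s, subset_rfl, hs, c, hc, rfl⟩
    obtain ⟨j, hj, c', hc', hsum⟩ := exists_nonneg_sum_erase_eq_of_not_linearIndepOn hs hc
    obtain ⟨t, hts, ht, c'', hc'', hsum'⟩ := ih _ (Finset.erase_ssubset hj) hc'
    exact ⟨t, hts.trans (Finset.erase_subset j s), ht, c'', hc'', hsum'.trans hsum⟩

end ConicCaratheodory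

namespace PointedCone

variable {E : Type*} [NormedAddCommGroup E] [NormedSpace ℝ E] {ι : Type*} [Fintype ι]

theorem mem_hull_range_iff {v : ι → E} {x : E} :
    x ∈ hull ℝ (Set.range v) ↔ ∃ c : ι → ℝ, 0 ≤ c ∧ ∑ i, c i • v i = x := by
  rw [Submodule.mem_span_range_iff_exists_fun]
  constructor
  · rintro ⟨c, rfl⟩
    exact ⟨fun i => c i, fun i => (c i).2, rfl⟩
  · rintro ⟨c, hc, rfl⟩
    exact ⟨fun i => ⟨c i, hc i⟩, rfl⟩

theorem isClosed_hull_range_of_linearIndependent {v : ι → E} (hv : LinearIndependent ℝ v) :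
    IsClosed (hull ℝ (Set.range v) : Set E) := by
  have : (hull ℝ (Set.range v) : Set E) = Fintype.linearCombination ℝ v '' Set.Ici 0 := by
    ext x
    simp [mem_hull_range_iff, Fintype.linearCombination_apply]
  rw [this]
  exact (LinearMap.isClosedEmbedding_of_injective
    (LinearMap.ker_eq_bot.2 hv.fintypeLinearCombination_injective)).isClosedMap _ isClosed_Ici

theorem isClosed_hull_range (v : ι → E) : IsClosed (hull ℝ (Set.range v) : Set E) := by
  classical
  have : (hull ℝ (Set.range v) : Set E) =
      ⋃ (t : Finset ι) (_ : LinearIndepOn ℝ v t), hull ℝ (Set.range fun i : t => v i) := by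
    refine subset_antisymm (fun x hx => ?_) <| Set.iUnion₂_subset fun t _ =>
      Submodule.span_mono <| Set.range_subset_iff.2 fun i => ⟨i, rfl⟩
    obtain ⟨c, hc, rfl⟩ := mem_hull_range_iff.1 hx
    obtain ⟨t, -, ht, c', hc', hsum⟩ :=
      exists_linearIndepOn_nonneg_sum_eq (v := v) Finset.univ fun i _ => hc i
    exact Set.mem_iUnion₂.2 ⟨t, ht, mem_hull_range_iff.2
      ⟨fun i => c' i, fun i => hc' i i.2, (t.sum_coe_sort fun i => c' i • v i).trans hsum⟩⟩
  rw [this]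
  exact isClosed_iUnion_of_finite fun t => isClosed_iUnion_of_finite fun ht =>
    isClosed_hull_range_of_linearIndependent ht

end PointedCone

namespace Matrix

variable {m n : Type*} [Fintype n] {A : Matrix m n ℝ} {b : m → ℝ} {w : n → ℝ} {c : ℝ}

theorem dotProduct_le_mul_of_mulVec_le_smul {v₀ : n → ℝ} (hv₀ : A *ᵥ v₀ ≤ b)
    (hc : ∀ v, A *ᵥ v ≤ b → w ⬝ᵥ v ≤ c) {x : n → ℝ} {τ : ℝ} (hτ : 0 ≤ τ)
    (hx : A *ᵥ x ≤ τ • b) : w ⬝ᵥ x ≤ τ * c := by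
  -- `(x + s • v₀) / (τ + s)` is feasible for every `s > 0`; then let `s → 0`
  have hbound : ∀ s : ℝ, 0 < s → w ⬝ᵥ x ≤ τ * c + s * (c - w ⬝ᵥ v₀) := by
    intro s hs
    have hτs : 0 < τ + s := by linarith
    have hfeas : A *ᵥ ((τ + s)⁻¹ • (x + s • v₀)) ≤ b := by
      rw [mulVec_smul, mulVec_add, mulVec_smul]
      calc (τ + s)⁻¹ • (A *ᵥ x + s • A *ᵥ v₀) ≤ (τ + s)⁻¹ • (τ • b + s • b) := by gcongr
        _ = b := by rw [← add_smul, smul_smul, inv_mul_cancel₀ hτs.ne', one_smul]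
    have := hc _ hfeas
    rw [dotProduct_smul, dotProduct_add, dotProduct_smul, smul_eq_mul, smul_eq_mul,
      inv_mul_le_iff₀ hτs] at this
    linarith
  have hlim : Tendsto (fun s => τ * c + s * (c - w ⬝ᵥ v₀)) (𝓝[>] 0) (𝓝 (τ * c)) := by
    have : Continuous fun s : ℝ => τ * c + s * (c - w ⬝ᵥ v₀) := by fun_prop
    simpa using (this.tendsto 0).mono_left nhdsWithin_le_nhds
  exact ge_of_tendsto hlim (eventually_nhdsWithin_of_forall hbound)

theorem exists_nonneg_vecMul_eq_of_forall_dotProduct_le [Fintype m] (hne : ∃ v₀, A *ᵥ v₀ ≤ b)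
    (hc : ∀ v, A *ᵥ v ≤ b → w ⬝ᵥ v ≤ c) :
    ∃ y : m → ℝ, 0 ≤ y ∧ y ᵥ* A = w ∧ y ⬝ᵥ b ≤ c := by
  classical
  obtain ⟨v₀, hv₀⟩ := hne
  let g : m ⊕ Unit → (n → ℝ) × ℝ := Sum.elim (fun i => (A i, b i)) fun _ => (0, 1)
  suffices (w, c) ∈ PointedCone.hull ℝ (Set.range g) by
    obtain ⟨κ, hκ, hsum⟩ := PointedCone.mem_hull_range_iff.1 this
    simp only [g, Fintype.sum_sum_type, Sum.elim_inl, Sum.elim_inr, Prod.smul_mk, smul_eq_mul,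
      smul_zero, mul_one, Finset.univ_unique, Finset.sum_singleton, Prod.ext_iff, Prod.fst_add,
      Prod.snd_add, Prod.fst_sum, Prod.snd_sum, add_zero] at hsum
    obtain ⟨hκw, hκc⟩ := hsum
    refine ⟨κ ∘ Sum.inl, fun i => hκ _, by rwa [vecMul_eq_sum], ?_⟩
    rw [← hκc]
    exact le_add_of_nonneg_right (hκ _)
  by_contra hwc
  obtain ⟨φ, hφ, hφwc⟩ := ProperCone.hyperplane_separation_point
    ⟨PointedCone.hull ℝ (Set.range g), PointedCone.isClosed_hull_range g⟩ hwc
  set u : n → ℝ := fun j => φ (fun k => if j = k then 1 else 0, 0)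
  set t : ℝ := φ (0, 1)
  have hφ_apply : ∀ p r, φ (p, r) = p ⬝ᵥ u + r * t := by
    intro p r
    have hsplit : (p, r) = (p, 0) + r • ((0 : n → ℝ), (1 : ℝ)) := by ext <;> simp
    have hp := LinearMap.pi_apply_eq_sum_univ
      (φ.comp (ContinuousLinearMap.inl ℝ (n → ℝ) ℝ) : (n → ℝ) →ₗ[ℝ] ℝ) p
    simp only [ContinuousLinearMap.coe_comp, ContinuousLinearMap.coe_coe,
      Function.comp_apply, ContinuousLinearMap.inl_apply, smul_eq_mul] at hp
    rw [hsplit, map_add, map_smul, smul_eq_mul, hp]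
    rfl
  have ht : 0 ≤ t := hφ _ (PointedCone.subset_hull ⟨Sum.inr (), rfl⟩)
  have hAu : A *ᵥ (-u) ≤ t • b := fun i => by
    have := hφ _ (PointedCone.subset_hull ⟨Sum.inl i, rfl⟩)
    rw [show g (Sum.inl i) = (A i, b i) from rfl, hφ_apply] at this
    rw [mulVec_neg, Pi.neg_apply, Pi.smul_apply, smul_eq_mul]
    change -(A i ⬝ᵥ u) ≤ t * b i
    linarith
  have := dotProduct_le_mul_of_mulVec_le_smul hv₀ hc ht hAu
  rw [hφ_apply] at hφwc
  rw [dotProduct_neg] at this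
  linarith

end Matrix

theorem lp_nonnegative_representation_general {S : Type*}
    (F : Finset (S → ℝ))
    (R d : ℕ) (A : Matrix (Fin R) (Fin d) ℝ) (bvec : Fin R → ℝ)
    (pt : S → Fin d → ℝ) (w : (S → ℝ) → Fin d → ℝ)
    (hfeas : ∀ s : S, A.mulVec (pt s) ≤ bvec)
    (hlin : ∀ f ∈ F, ∀ s : S, dotProduct (w f) (pt s) = f s)
    (hne : ∃ v : Fin d → ℝ, A.mulVec v ≤ bvec) :
    ∃ q : Fin (R + 1) → S → ℝ,
      (∀ i s, 0 ≤ q i s) ∧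
      ∀ f ∈ F, ∀ c : ℝ,
        (∀ v : Fin d → ℝ, A.mulVec v ≤ bvec → dotProduct (w f) v ≤ c) →
        ∃ pc : Fin (R + 1) → ℝ, (∀ i, 0 ≤ pc i) ∧
          ∀ s : S, c - f s = ∑ i : Fin (R + 1), pc i * q i s := by
  refine ⟨Fin.cons (fun _ => 1) fun i s => (bvec - A *ᵥ pt s) i, fun i s => ?_, ?_⟩
  · cases i using Fin.cases with
    | zero => exact zero_le_one
    | succ i => exact sub_nonneg.2 (hfeas s i)
  intro f hf c hc
  obtain ⟨y, hy, hyA, hyb⟩ := exists_nonneg_vecMul_eq_of_forall_dotProduct_le hne hc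
  refine ⟨Fin.cons (c - y ⬝ᵥ bvec) y, fun i => ?_, fun s => ?_⟩
  · cases i using Fin.cases with
    | zero => exact sub_nonneg.2 hyb
    | succ i => exact hy i
  have hslack : y ⬝ᵥ (bvec - A *ᵥ pt s) = y ⬝ᵥ bvec - f s := by
    rw [dotProduct_sub, dotProduct_mulVec, hyA, hlin f hf s]
  rw [Fin.sum_univ_succ]
  simp only [Fin.cons_zero, Fin.cons_succ, mul_one]
  rw [← dotProduct, hslack]
  ring

/-- a linear programming formulation of size `R` of a maximization problem
certifying an upper bound `c` on an objective `f` yields a nonnegative representation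
`c - f(s) = Σ_{i=0}^R p_i(f) q_i(s)`, with the nonnegative functions `q_i` chosen
independently of `f`. -/
theorem lp_nonnegative_representation {S : Type*} [Fintype S] [Nonempty S]
    (F : Finset (S → ℝ)) (hF : ∀ f ∈ F, ∀ s : S, 0 ≤ f s)
    (R d : ℕ) (A : Matrix (Fin R) (Fin d) ℝ) (bvec : Fin R → ℝ)
    (pt : S → Fin d → ℝ) (w : (S → ℝ) → Fin d → ℝ)
    (hfeas : ∀ s : S, A.mulVec (pt s) ≤ bvec)
    (hlin : ∀ f ∈ F, ∀ s : S, dotProduct (w f) (pt s) = f s)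
    (hne : ∃ v : Fin d → ℝ, A.mulVec v ≤ bvec) :
    ∃ q : Fin (R + 1) → S → ℝ,
      (∀ i s, 0 ≤ q i s) ∧
      ∀ f ∈ F, ∀ c : ℝ,
        (∀ v : Fin d → ℝ, A.mulVec v ≤ bvec → dotProduct (w f) v ≤ c) →
        ∃ pc : Fin (R + 1) → ℝ, (∀ i, 0 ≤ pc i) ∧
          ∀ s : S, c - f s = ∑ i : Fin (R + 1), pc i * q i s :=
  lp_nonnegative_representation_general F R d A bvec pt w hfeas hlin hne
end

section
/- For all α ⊆ [n], β ⊆ E_{n,k}, γ ⊆ E_{n,k}×[k]: if the Fourier coefficient μ̂*(α,β,γ) = E_{(x,y,b)∼D*}[χ_α(x)φ_β(y)ψ_γ(b)] is nonzero, then γ ⊢ α. -/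
open Finset Matrix
open scoped BigOperators Classical

noncomputable section

namespace RandomCSP

/-- Scopes: `k`-tuples of distinct indices in `[n]`, i.e. injective maps `Fin k → Fin n`. -/
abbrev Scope (n k : ℕ) := {S : Fin k → Fin n // Function.Injective S}

/-- An instance of a CSP: for each scope an inclusion bit (`true` encodes `y_S = -1`,
i.e. the constraint on scope `S` is included) and a tuple of negation bits
(`true` encodes `-1`). -/
abbrev Inst (n k : ℕ) := (Scope n k → Bool) × (Scope n k → Fin k → Bool)

/-- Assignments to the `n` variables (`true` encodes `-1`). -/
abbrev Assign (n : ℕ) := Fin n → Bool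

/-- Sign encoding: `true ↦ -1`, `false ↦ 1`. -/
def sgn (b : Bool) : ℝ := if b then -1 else 1

/-- The bits of the tuple `b_S ∘ x_S` (the product of signs is the xor of the bits). -/
def litBits (n k : ℕ) (x : Assign n) (I : Inst n k) (S : Scope n k) : Fin k → Bool :=
  fun j => xor (I.2 S j) (x (S.1 j))

/-- Probability mass of an instance under the distribution `D(p)`: each scope is included
independently with probability `p` and all negation bits are independent uniform bits. -/
def dpMass (n k : ℕ) (p : ℝ) (I : Inst n k) : ℝ :=
  (∏ S : Scope n k, if I.1 S then p else 1 - p) * (1 / 2) ^ (Fintype.card (Scope n k) * k)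

/-- Background mass on pairs (assignment, instance): uniform × `D(p)`. -/
def bgMass (n k : ℕ) (p : ℝ) (w : Assign n × Inst n k) : ℝ :=
  (1 / 2) ^ n * dpMass n k p w.2

/-- Probability mass of the planted distribution `D*` determined by a density `ηP` on
`{-1,1}^k`: `x` is uniform, each scope is included independently with probability `p`;
on included scopes `b_S = z_S ∘ x_S` with `z_S ∼ ηP`, on excluded scopes `b_S` is uniform. -/
def plantedMass (n k : ℕ) (p : ℝ) (ηP : (Fin k → Bool) → ℝ) (w : Assign n × Inst n k) : ℝ :=
  (1 / 2) ^ n * ∏ S : Scope n k,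
    (if w.2.1 S then p * (ηP (litBits n k w.1 w.2 S) * (1 / 2) ^ k)
     else (1 - p) * (1 / 2) ^ k)

/-- The planted density `μ*` relative to uniform × `D(p)`. -/
def muStar (n k : ℕ) (p : ℝ) (ηP : (Fin k → Bool) → ℝ) (w : Assign n × Inst n k) : ℝ :=
  plantedMass n k p ηP w / bgMass n k p w

/-- `P` supports a `(t-1)`-wise uniform distribution on satisfying assignments, with
density `ηP` relative to the uniform distribution on `{-1,1}^k`. -/
def SupportsUniform (k t : ℕ) (P : (Fin k → Bool) → Bool) (ηP : (Fin k → Bool) → ℝ) : Prop :=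
  (∀ z, 0 ≤ ηP z) ∧
  ((1 / 2 : ℝ) ^ k * ∑ z : Fin k → Bool, ηP z) = 1 ∧
  (∀ z, ηP z ≠ 0 → P z = true) ∧
  ∀ T : Finset (Fin k), T.card = t - 1 → ∀ a : Fin k → Bool,
    ((1 / 2 : ℝ) ^ k * ∑ z : Fin k → Bool, if ∀ j ∈ T, z j = a j then ηP z else 0)
      = (1 / 2 : ℝ) ^ (t - 1)

/-- The objective value `F(x,y,b) = Σ_S 1(y_S = -1)·P(b_S ∘ x_S)`. -/
def objVal (n k : ℕ) (P : (Fin k → Bool) → Bool) (x : Assign n) (I : Inst n k) : ℝ :=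
  ∑ S : Scope n k, if I.1 S = true ∧ P (litBits n k x I S) = true then 1 else 0

/-- Parity character `χ_α`. -/
def chiF (n : ℕ) (α : Finset (Fin n)) (x : Assign n) : ℝ := ∏ i ∈ α, sgn (x i)

/-- The `p`-biased single coordinate character: `φ(-1) = -√(q/p)`, `φ(1) = √(p/q)`. -/
def phiY (p : ℝ) (v : Bool) : ℝ :=
  if v then -Real.sqrt ((1 - p) / p) else Real.sqrt (p / (1 - p))

/-- The `p`-biased character `φ_β` on the inclusion bits. -/
def phiF (n k : ℕ) (p : ℝ) (β : Finset (Scope n k)) (y : Scope n k → Bool) : ℝ :=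
  ∏ S ∈ β, phiY p (y S)

/-- The character `ψ_γ` on the negation bits. -/
def psiF (n k : ℕ) (γ : Finset (Scope n k × Fin k)) (b : Scope n k → Fin k → Bool) : ℝ :=
  ∏ e ∈ γ, sgn (b e.1 e.2)

/-- `γ̄`: the set of scopes present in `γ`. -/
def scopesOf (n k : ℕ) (γ : Finset (Scope n k × Fin k)) : Finset (Scope n k) :=
  γ.image Prod.fst

/-- The Fourier coefficient `f̂(α,β,γ)` of a function on pairs (assignment, instance),
with respect to the background measure uniform × `D(p)`. -/
def fhat (n k : ℕ) (p : ℝ) (f : Assign n × Inst n k → ℝ)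
    (α : Finset (Fin n)) (β : Finset (Scope n k)) (γ : Finset (Scope n k × Fin k)) : ℝ :=
  ∑ w : Assign n × Inst n k,
    bgMass n k p w * f w * chiF n α w.1 * phiF n k p β w.2.1 * psiF n k γ w.2.2

/-- The Fourier coefficient of the planted density:
`μ̂*(α,β,γ) = E_{(x,y,b) ∼ D*}[χ_α(x) φ_β(y) ψ_γ(b)]`. -/
def muHat (n k : ℕ) (p : ℝ) (ηP : (Fin k → Bool) → ℝ)
    (α : Finset (Fin n)) (β : Finset (Scope n k)) (γ : Finset (Scope n k × Fin k)) : ℝ :=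
  ∑ w : Assign n × Inst n k,
    plantedMass n k p ηP w * chiF n α w.1 * phiF n k p β w.2.1 * psiF n k γ w.2.2

/-- The low-degree projection `L_d`, keeping exactly the Fourier terms `χ_α φ_β ψ_γ`
with `|α| ≤ d_x` and `|β ∪ γ̄| ≤ d_I`. -/
def Ld (n k : ℕ) (p : ℝ) (dx dI : ℕ) (f : Assign n × Inst n k → ℝ) :
    Assign n × Inst n k → ℝ :=
  fun w => ∑ α : Finset (Fin n), ∑ β : Finset (Scope n k), ∑ γ : Finset (Scope n k × Fin k),
    if α.card ≤ dx ∧ (β ∪ scopesOf n k γ).card ≤ dI then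
      fhat n k p f α β γ * chiF n α w.1 * phiF n k p β w.2.1 * psiF n k γ w.2.2
    else 0

/-- Override the coordinates of `I` on the scopes in `U` by those of `J`. -/
def override (n k : ℕ) (U : Finset (Scope n k)) (J I : Inst n k) : Inst n k :=
  (fun S => if S ∈ U then J.1 S else I.1 S,
   fun S j => if S ∈ U then J.2 S j else I.2 S j)

/-- The restriction `R_U f`: fix the instance coordinates on the scopes in `U`
to the restricted instance given by `J`. -/
def restrictU (n k : ℕ) (U : Finset (Scope n k)) (J : Inst n k)
    (f : Assign n × Inst n k → ℝ) : Assign n × Inst n k → ℝ :=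
  fun w => f (w.1, override n k U J w.2)

/-- `V(U)`: the set of variable indices appearing in the scopes of `U`. -/
def varsOf (n k : ℕ) (U : Finset (Scope n k)) : Finset (Fin n) :=
  U.biUnion fun S => Finset.image S.1 Finset.univ

/-- Agreement of `w'` with `w` on a block of variables `V` and scopes `U`. -/
def agreeOn (n k : ℕ) (V : Finset (Fin n)) (U : Finset (Scope n k))
    (w' w : Assign n × Inst n k) : Prop :=
  (∀ i ∈ V, w'.1 i = w.1 i) ∧
  ∀ S ∈ U, w'.2.1 S = w.2.1 S ∧ ∀ j, w'.2.2 S j = w.2.2 S j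

/-- Marginal probability under the mass function `μ` of agreeing with `w` on `(V, U)`. -/
def marg (n k : ℕ) (μ : Assign n × Inst n k → ℝ)
    (V : Finset (Fin n)) (U : Finset (Scope n k)) (w : Assign n × Inst n k) : ℝ :=
  ∑ w' : Assign n × Inst n k, if agreeOn n k V U w' w then μ w' else 0

/-- `π_U(x_V, I_U) = Pr_{D*}[x_V, I_U] / Pr_{uniform×D(p)}[x_V, I_U]`. -/
def piU (n k : ℕ) (p : ℝ) (ηP : (Fin k → Bool) → ℝ) (U : Finset (Scope n k))
    (w : Assign n × Inst n k) : ℝ :=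
  marg n k (plantedMass n k p ηP) (varsOf n k U) U w /
    marg n k (bgMass n k p) (varsOf n k U) U w

/-- The conditioned planted density `μ*|_U(x, I_{Uᶜ}) =
Pr_{D*}[x_{Vᶜ}, I_{Uᶜ} | x_V, I_U] / Pr_{D(p)}[x_{Vᶜ}, I_{Uᶜ}]`, viewed as a function of
all of `x` and of the instance coordinates outside `U` (fixed to `J` on `U`). -/
def condMu (n k : ℕ) (p : ℝ) (ηP : (Fin k → Bool) → ℝ) (U : Finset (Scope n k)) (J : Inst n k)
    (w : Assign n × Inst n k) : ℝ :=
  (plantedMass n k p ηP (w.1, override n k U J w.2) /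
      marg n k (plantedMass n k p ηP) (varsOf n k U) U (w.1, J)) /
    marg n k (bgMass n k p) (varsOf n k U)ᶜ Uᶜ (w.1, override n k U J w.2)

/-- Fourier coefficients of the conditioned planted density. -/
def condMuHat (n k : ℕ) (p : ℝ) (ηP : (Fin k → Bool) → ℝ)
    (U : Finset (Scope n k)) (J : Inst n k)
    (α : Finset (Fin n)) (β : Finset (Scope n k)) (γ : Finset (Scope n k × Fin k)) : ℝ :=
  fhat n k p (condMu n k p ηP U J) α β γ

/-- `γ ⊢ α`: every index of `α` appears an odd number of times as some `S_j` with
`(S,j) ∈ γ`, and every other index appears an even number of times. -/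
def derives (n k : ℕ) (γ : Finset (Scope n k × Fin k)) (α : Finset (Fin n)) : Prop :=
  ∀ i : Fin n, i ∈ α ↔ Odd (γ.filter fun e => e.1.1 e.2 = i).card

/-- `r(γ) ≥ t`: every scope present in `γ` contributes at least `t` coordinates. -/
def arityGE (n k : ℕ) (γ : Finset (Scope n k × Fin k)) (t : ℕ) : Prop :=
  ∀ S ∈ scopesOf n k γ, t ≤ (γ.filter fun e => e.1 = S).card

/-- `N_r(α)`: the number of pairs `(β,γ)` with `γ ⊢ α`, `r(γ) ≥ t`, `β ⊆ γ̄`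
and `|γ̄| = r`. -/
def Ncount (n k t : ℕ) (α : Finset (Fin n)) (r : ℕ) : ℕ :=
  (Finset.univ.filter fun bg : Finset (Scope n k) × Finset (Scope n k × Fin k) =>
    derives n k bg.2 α ∧ arityGE n k bg.2 t ∧ bg.1 ⊆ scopesOf n k bg.2 ∧
      (scopesOf n k bg.2).card = r).card

/-- `D` is a probability mass function. -/
def IsDist {Ω : Type*} [Fintype Ω] (D : Ω → ℝ) : Prop :=
  (∀ I, 0 ≤ D I) ∧ (∑ I : Ω, D I) = 1

/-- Marginal probability under `D` that an instance agrees with `I'` on the scopes of `V`. -/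
def imarg (n k : ℕ) (D : Inst n k → ℝ) (V : Finset (Scope n k)) (I' : Inst n k) : ℝ :=
  ∑ I : Inst n k,
    if ∀ S ∈ V, I.1 S = I'.1 S ∧ ∀ j, I.2 S j = I'.2 S j then D I else 0

/-- `D` is a `d`-conjunctive blockwise-dense distribution with parameter `δ` relative to
`D(p)`, with fixed block `U` fixed to the restricted instance given by `J`. -/
def IsCBD (n k : ℕ) (p : ℝ) (D : Inst n k → ℝ) (d δ : ℝ)
    (U : Finset (Scope n k)) (J : Inst n k) : Prop :=
  IsDist D ∧ (U.card : ℝ) ≤ d ∧ imarg n k D U J = 1 ∧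
  ∀ V : Finset (Scope n k), Disjoint V U → ∀ I' : Inst n k,
    imarg n k D V I' ≤ imarg n k (dpMass n k p) V I' ^ (1 - δ)

/-- `E_{I ∼ D}[φ_β(y) ψ_γ(b)]`. -/
def expBasis (n k : ℕ) (p : ℝ) (D : Inst n k → ℝ)
    (β : Finset (Scope n k)) (γ : Finset (Scope n k × Fin k)) : ℝ :=
  ∑ I : Inst n k, D I * phiF n k p β I.1 * psiF n k γ I.2

/-- The sup norm `‖φ_β ψ_γ‖_∞`. -/
def supPhiPsi (n k : ℕ) (p : ℝ) (β : Finset (Scope n k))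
    (γ : Finset (Scope n k × Fin k)) : ℝ :=
  max (Real.sqrt ((1 - p) / p)) (Real.sqrt (p / (1 - p))) ^ β.card

/-- `μ*` exhibits `ε(s_x, s_I)`-conditional Fourier decay, witnessed by the bounds `B`. -/
def CondDecay (n k : ℕ) (p : ℝ) (ηP : (Fin k → Bool) → ℝ) (dx dI b : ℕ) (δ : ℝ)
    (ε : ℕ → ℕ → ℝ)
    (B : Finset (Scope n k) → Finset (Fin n) → Finset (Scope n k) →
      Finset (Scope n k × Fin k) → ℝ) : Prop :=
  (∀ (D : Inst n k → ℝ) (U : Finset (Scope n k)) (J : Inst n k),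
      IsCBD n k p D (b : ℝ) δ U J →
      (∀ α β γ, |condMuHat n k p ηP U J α β γ| ≤ B U α β γ) ∧
      ∀ α : Finset (Fin n), α.card ≤ dx → ∀ sI : ℕ, sI ≤ dI →
        (∑ β : Finset (Scope n k), ∑ γ : Finset (Scope n k × Fin k),
            if sI ≤ (β ∪ scopesOf n k γ).card ∧ (β ∪ scopesOf n k γ).card ≤ dI then
              B U α β γ * expBasis n k p D β γ
            else 0)
          ≤ (n.choose α.card : ℝ) ^ (-(1 : ℝ) / 2) * ε α.card sI) ∧
  ∀ (α : Finset (Fin n)) (β β' : Finset (Scope n k)) (γ γ' : Finset (Scope n k × Fin k)),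
    Disjoint (β ∪ scopesOf n k γ) (β' ∪ scopesOf n k γ') →
    B ∅ α (β ∪ β') (γ ∪ γ') * supPhiPsi n k p β' γ' ≤ B ∅ α β γ

/-- The conditional Fourier decay rate for CSPs:
`ε(s_x, s_I) = (CΔ)^s (s/n)^{((t-2)/2)s} (s/s_x)^{s_x/2}` with `s = max(⌈s_x/k⌉, s_I)`. -/
def epsCSP (n k t : ℕ) (Δ C : ℝ) (sx sI : ℕ) : ℝ :=
  let s : ℕ := max (Nat.ceil ((sx : ℝ) / k)) sI
  (C * Δ) ^ s * ((s : ℝ) / n) ^ (((t : ℝ) - 2) / 2 * s) * ((s : ℝ) / sx) ^ ((sx : ℝ) / 2)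

/-- The error term `h` from the decomposition
`R_U μ̄* = π_U · L_{d''}(μ*|_U) + h`. -/
def errH (n k : ℕ) (p : ℝ) (ηP : (Fin k → Bool) → ℝ) (dx dI : ℕ)
    (U : Finset (Scope n k)) (J : Inst n k) : Assign n × Inst n k → ℝ :=
  fun w =>
    (Ld n k p dx (dI - U.card) (restrictU n k U J (muStar n k p ηP)) w
        - Ld n k p dx (dI - 2 * U.card) (restrictU n k U J (muStar n k p ηP)) w)
      + (restrictU n k U J (Ld n k p dx dI (muStar n k p ηP)) w
        - Ld n k p dx (dI - U.card)
            (restrictU n k U J (Ld n k p dx dI (muStar n k p ηP))) w)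

/-- A linear programming formulation of `CSP(P)` of size `R`. -/
structure LPForm (n k : ℕ) (P : (Fin k → Bool) → Bool) (R : ℕ) where
  dim : ℕ
  A : Matrix (Fin R) (Fin dim) ℝ
  bvec : Fin R → ℝ
  pt : Assign n → Fin dim → ℝ
  wt : Inst n k → Fin dim → ℝ
  feas : ∀ x, A.mulVec (pt x) ≤ bvec
  linearize : ∀ I x, dotProduct (wt I) (pt x) = objVal n k P x I

/-- The LP formulation certifies the upper bound `c` on the objective of instance `I`. -/
def Certifies {n k : ℕ} {P : (Fin k → Bool) → Bool} {R : ℕ}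
    (L : LPForm n k P R) (I : Inst n k) (c : ℝ) : Prop :=
  ∀ v : Fin L.dim → ℝ, L.A.mulVec v ≤ L.bvec → dotProduct (L.wt I) v ≤ c

end RandomCSP

end

/-!
Flipping the variable `x_i` together with every negation bit `b_{(S,j)}` with `S_j = i`
leaves each literal tuple `b_S ∘ x_S`, hence the planted distribution `D*`, unchanged, while
it multiplies `χ_α(x) ψ_γ(b)` by `(-1)^(1(i ∈ α) + c_i)`. So `μ̂*(α,β,γ)` equals its own
negative as soon as the parity of `c_i` disagrees with membership of `i` in `α`.
-/

namespace RandomCSP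

lemma sgn_xor (a b : Bool) : sgn (xor a b) = sgn a * sgn b := by
  cases a <;> cases b <;> norm_num [sgn]

lemma prod_sgn_xor_decide {ι : Type*} (s : Finset ι) (q : ι → Prop) [DecidablePred q]
    (g : ι → Bool) :
    ∏ e ∈ s, sgn (xor (decide (q e)) (g e)) = (-1) ^ #(s.filter q) * ∏ e ∈ s, sgn (g e) := by
  have hsgn : ∀ e, sgn (decide (q e)) = if q e then -1 else 1 := fun e => by
    by_cases h : q e <;> simp [sgn, h]
  simp_rw [sgn_xor, prod_mul_distrib, hsgn, ← prod_filter, prod_const]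

def flipAt {n k : ℕ} (i : Fin n) (w : Assign n × Inst n k) : Assign n × Inst n k :=
  (fun j => xor (decide (j = i)) (w.1 j),
   (w.2.1, fun S j => xor (decide (S.1 j = i)) (w.2.2 S j)))

lemma flipAt_involutive {n k : ℕ} (i : Fin n) : Function.Involutive (flipAt (k := k) i) := by
  intro w
  simp [flipAt]

@[simp]
lemma flipAt_snd_fst {n k : ℕ} (i : Fin n) (w : Assign n × Inst n k) :
    (flipAt i w).2.1 = w.2.1 :=
  rfl

lemma litBits_flipAt {n k : ℕ} (i : Fin n) (w : Assign n × Inst n k) (S : Scope n k) :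
    litBits n k (flipAt i w).1 (flipAt i w).2 S = litBits n k w.1 w.2 S := by
  funext j
  simp only [litBits, flipAt]
  cases decide (S.1 j = i) <;> simp

lemma plantedMass_flipAt {n k : ℕ} (p : ℝ) (ηP : (Fin k → Bool) → ℝ) (i : Fin n)
    (w : Assign n × Inst n k) :
    plantedMass n k p ηP (flipAt i w) = plantedMass n k p ηP w := by
  simp only [plantedMass, litBits_flipAt]
  rfl

lemma chiF_flipAt {n k : ℕ} (α : Finset (Fin n)) (i : Fin n) (w : Assign n × Inst n k) :
    chiF n α (flipAt i w).1 = (-1) ^ #(α.filter (· = i)) * chiF n α w.1 :=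
  prod_sgn_xor_decide α (· = i) w.1

lemma psiF_flipAt {n k : ℕ} (γ : Finset (Scope n k × Fin k)) (i : Fin n)
    (w : Assign n × Inst n k) :
    psiF n k γ (flipAt i w).2.2 =
      (-1) ^ #(γ.filter fun e => e.1.1 e.2 = i) * psiF n k γ w.2.2 :=
  prod_sgn_xor_decide γ (fun e => e.1.1 e.2 = i) (fun e => w.2.2 e.1 e.2)

lemma muHat_eq_neg_one_pow_mul {n k : ℕ} (p : ℝ) (ηP : (Fin k → Bool) → ℝ)
    (α : Finset (Fin n)) (β : Finset (Scope n k)) (γ : Finset (Scope n k × Fin k)) (i : Fin n) :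
    muHat n k p ηP α β γ =
      (-1) ^ (#(α.filter (· = i)) + #(γ.filter fun e => e.1.1 e.2 = i)) *
        muHat n k p ηP α β γ := by
  unfold muHat
  conv_lhs => rw [← Equiv.sum_comp (flipAt_involutive i).toPerm]
  rw [mul_sum]
  refine sum_congr rfl fun w _ => ?_
  simp only [Function.Involutive.coe_toPerm, plantedMass_flipAt, chiF_flipAt, psiF_flipAt,
    flipAt_snd_fst]
  ring

theorem muHat_ne_zero_derives_general (n k : ℕ) (ηP : (Fin k → Bool) → ℝ)
    (p : ℝ)
    (α : Finset (Fin n)) (β : Finset (Scope n k)) (γ : Finset (Scope n k × Fin k)) :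
    muHat n k p ηP α β γ ≠ 0 → derives n k γ α := by
  intro hμ i
  by_contra hparity
  have hodd : Odd (#(α.filter (· = i)) + #(γ.filter fun e => e.1.1 e.2 = i)) := by
    rw [filter_eq']
    by_cases hi : i ∈ α <;> simp_all [Nat.not_odd_iff_even]
  have h := muHat_eq_neg_one_pow_mul p ηP α β γ i
  rw [hodd.neg_one_pow] at h
  exact hμ (by linarith)

/-- nonzero Fourier coefficients of the planted density satisfy `γ ⊢ α`. -/
theorem muHat_ne_zero_derives (n k t : ℕ) (hk : 2 ≤ k) (htk : t ≤ k) (hn : k ≤ n)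
    (P : (Fin k → Bool) → Bool) (ηP : (Fin k → Bool) → ℝ)
    (hP : SupportsUniform k t P ηP)
    (p : ℝ) (hp0 : 0 < p) (hp1 : p < 1)
    (α : Finset (Fin n)) (β : Finset (Scope n k)) (γ : Finset (Scope n k × Fin k)) :
    muHat n k p ηP α β γ ≠ 0 → derives n k γ α :=
  muHat_ne_zero_derives_general n k ηP p α β γ

end RandomCSP
end

section
/- For all α ⊆ [n], β ⊆ E_{n,k}, γ ⊆ E_{n,k}×[k]: if γ ⊢ α, r(γ) ≥ t and β ⊆ γ̄, then |μ̂*(α,β,γ)| ≤ √(pq)^{|γ̄ ∩ β|} · p^{|γ̄ \ β|}; and if any of these three conditions fails, then μ̂*(α,β,γ) = 0. -/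
open Finset Matrix
open scoped BigOperators Classical

/-!
Conditionally on the assignment `x`, the scopes of `D*` are independent, so the sum over
instances factorizes into one factor per scope, each a multiple of the character
`∏_{j ∈ γ_S} x_{S_j}`; the remaining average over `x` of `χ_α` times these characters is the
indicator of `γ ⊢ α`. Hence `μ̂*(α,β,γ) = [γ ⊢ α] ∏_S c_S`. For a scope outside `γ̄` the
factor is `1`, or `E[φ(y_S)] = 0` when `S ∈ β`. For `S ∈ γ̄` it is
`p · φ(-1)^[S ∈ β] · η̂_P(γ_S)`, where the Walsh coefficient `η̂_P(γ_S)` has absolute value at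
most `η̂_P(∅) = 1` because `η_P` is a probability density, and vanishes when
`0 < |γ_S| < t` by `(t-1)`-wise uniformity.
-/

namespace RandomCSP

lemma abs_sgn (b : Bool) : |sgn b| = 1 := by
  cases b <;> simp [sgn]

lemma sum_sgn_pow (m : ℕ) : ∑ b : Bool, sgn b ^ m = if Even m then 2 else 0 := by
  rcases Nat.even_or_odd m with h | h
  · simp [sgn, h.neg_one_pow, h, one_add_one_eq_two]
  · simp [sgn, h.neg_one_pow, Nat.not_even_iff_odd.mpr h]

lemma sum_sum_prod_apply {ι κ μ : Type*} [Fintype ι] [DecidableEq ι] [Fintype κ] [Fintype μ]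
    (F : ι → κ → μ → ℝ) :
    ∑ y : ι → κ, ∑ b : ι → μ, ∏ i, F i (y i) (b i) = ∏ i, ∑ v, ∑ c, F i v c := by
  simp_rw [← Fintype.prod_sum]
  exact (Fintype.prod_sum fun i v => ∑ c, F i v c).symm

section Walsh

variable {ι : Type*} [Fintype ι] [DecidableEq ι]

lemma sum_prod_sgn_pow (m : ι → ℕ) :
    ∑ x : ι → Bool, ∏ i, sgn (x i) ^ m i = if ∀ i, Even (m i) then 2 ^ Fintype.card ι else 0 := by
  simp_rw [← Fintype.prod_sum fun i b => sgn b ^ m i, sum_sgn_pow, Finset.prod_ite_zero,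
    Finset.prod_const, Finset.card_univ, Finset.mem_univ, true_implies]

lemma prod_sgn_eq_prod_pow (T : Finset ι) (x : ι → Bool) :
    ∏ j ∈ T, sgn (x j) = ∏ j, sgn (x j) ^ (if j ∈ T then 1 else 0) := by
  simp [pow_ite, Finset.prod_ite_mem]

noncomputable def walshCoeff (f : (ι → Bool) → ℝ) (T : Finset ι) : ℝ :=
  (1 / 2) ^ Fintype.card ι * ∑ z, f z * ∏ j ∈ T, sgn (z j)

lemma walshCoeff_one (T : Finset ι) :
    walshCoeff (fun _ => 1) T = if T = ∅ then 1 else 0 := by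
  have hEven : (∀ j, Even (if j ∈ T then 1 else 0)) ↔ T = ∅ := by
    simp [Finset.eq_empty_iff_forall_notMem, apply_ite]
  simp_rw [walshCoeff, one_mul, prod_sgn_eq_prod_pow, sum_prod_sgn_pow, hEven]
  split_ifs <;> simp

lemma walshCoeff_comp_xor (f : (ι → Bool) → ℝ) (u : ι → Bool) (T : Finset ι) :
    walshCoeff (fun c => f fun j => xor (c j) (u j)) T
      = (∏ j ∈ T, sgn (u j)) * walshCoeff f T := by
  have hinv : Function.Involutive fun c : ι → Bool => fun j => xor (c j) (u j) := by
    intro c; funext j; simp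
  rw [walshCoeff, walshCoeff, ← Equiv.sum_comp (hinv.toPerm _), Finset.mul_sum, Finset.mul_sum,
    Finset.mul_sum]
  refine Finset.sum_congr rfl fun c _ => ?_
  simp only [Function.Involutive.coe_toPerm, sgn_xor, Finset.prod_mul_distrib,
    Bool.xor_assoc, Bool.xor_self, Bool.xor_false]
  ring

lemma abs_walshCoeff_le {f : (ι → Bool) → ℝ} (hf : ∀ z, 0 ≤ f z) (T : Finset ι) :
    |walshCoeff f T| ≤ walshCoeff f ∅ := by
  rw [walshCoeff, walshCoeff, abs_mul, abs_of_nonneg (by positivity)]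
  gcongr
  refine (Finset.abs_sum_le_sum_abs _ _).trans_eq (Finset.sum_congr rfl fun z _ => ?_)
  simp [abs_mul, abs_of_nonneg (hf z), Finset.abs_prod, abs_sgn]

lemma sum_prod_sgn_eq_zero {T : Finset ι} (hT : T ≠ ∅) :
    ∑ a : ι → Bool, ∏ j ∈ T, sgn (a j) = 0 := by
  have h := walshCoeff_one T
  simp only [walshCoeff, one_mul, if_neg hT] at h
  exact (mul_eq_zero.mp h).resolve_left (by positivity)

lemma sum_agree_prod_sgn {T T' : Finset ι} (hTT' : T ⊆ T') (z : ι → Bool) :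
    ∑ a : ι → Bool, (if ∀ j ∈ T', z j = a j then ∏ j ∈ T, sgn (a j) else 0)
      = (∏ j, if j ∈ T' then (1 : ℝ) else 2) * ∏ j ∈ T, sgn (z j) := by
  have hfiber : ({a | ∀ j ∈ T', z j = a j} : Finset (ι → Bool))
      = Fintype.piFinset fun j => if j ∈ T' then {z j} else univ := by
    ext a
    simp only [Finset.mem_filter, Finset.mem_univ, true_and, Fintype.mem_piFinset]
    refine forall_congr' fun j => ?_
    split_ifs with hj
    · simp [hj, eq_comm (a := z j)]
    · simp [hj]
  have hconst : ∀ a ∈ ({a | ∀ j ∈ T', z j = a j} : Finset (ι → Bool)),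
      ∏ j ∈ T, sgn (a j) = ∏ j ∈ T, sgn (z j) := fun a ha =>
    Finset.prod_congr rfl fun j hj => by rw [((Finset.mem_filter.mp ha).2 j (hTT' hj))]
  rw [← Finset.sum_filter, Finset.sum_congr rfl hconst, Finset.sum_const, hfiber,
    Fintype.card_piFinset, nsmul_eq_mul]
  push_cast [apply_ite Finset.card, Finset.card_singleton, Finset.card_univ, Fintype.card_bool]
  rfl

lemma walshCoeff_eq_zero_of_marginal_const {f : (ι → Bool) → ℝ} {T T' : Finset ι}
    (hTT' : T ⊆ T') (hT : T ≠ ∅) (c : ℝ)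
    (hmarg : ∀ a : ι → Bool,
      (1 / 2) ^ Fintype.card ι * ∑ z, (if ∀ j ∈ T', z j = a j then f z else 0) = c) :
    walshCoeff f T = 0 := by
  have hN : (∏ j, if j ∈ T' then (1 : ℝ) else 2) ≠ 0 :=
    Finset.prod_ne_zero_iff.mpr fun j _ => by split_ifs <;> norm_num
  refine (mul_eq_zero.mp ?_).resolve_left hN
  -- pair the constant marginal with `χ_T`: summed over `a` first it gives `c · ∑ χ_T = 0`,
  -- summed over each fibre `{a | a = z on T'}` first it gives a multiple of `f̂(T)`
  calc (∏ j, if j ∈ T' then (1 : ℝ) else 2) * walshCoeff f T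
      = (1 / 2) ^ Fintype.card ι * ∑ z, f z
          * ∑ a : ι → Bool, (if ∀ j ∈ T', z j = a j then ∏ j ∈ T, sgn (a j) else 0) := by
        simp_rw [sum_agree_prod_sgn hTT', walshCoeff, Finset.mul_sum]
        exact Finset.sum_congr rfl fun z _ => by ring
    _ = ∑ a : ι → Bool, ((1 / 2) ^ Fintype.card ι
          * ∑ z, (if ∀ j ∈ T', z j = a j then f z else 0)) * ∏ j ∈ T, sgn (a j) := by
        simp_rw [Finset.mul_sum, Finset.sum_mul]
        rw [Finset.sum_comm]
        refine Finset.sum_congr rfl fun z _ => Finset.sum_congr rfl fun a _ => ?_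
        split_ifs <;> ring
    _ = c * ∑ a : ι → Bool, ∏ j ∈ T, sgn (a j) := by
        simp_rw [hmarg, ← Finset.mul_sum]
    _ = 0 := by rw [sum_prod_sgn_eq_zero hT, mul_zero]

end Walsh

lemma mul_sqrt_div_eq_sqrt_mul {a b : ℝ} (ha : 0 < a) : a * √(b / a) = √(a * b) := by
  rw [← Real.sqrt_sq ha.le, ← Real.sqrt_mul (sq_nonneg a), Real.sqrt_sq ha.le]
  congr 1
  field_simp

lemma phiY_weighted_sum_eq_zero {p : ℝ} (hp0 : 0 < p) (hp1 : p < 1) :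
    p * phiY p true + (1 - p) * phiY p false = 0 := by
  rw [phiY, phiY, if_pos rfl, if_neg Bool.false_ne_true, mul_neg, mul_sqrt_div_eq_sqrt_mul hp0,
    mul_sqrt_div_eq_sqrt_mul (sub_pos.mpr hp1), mul_comm p, neg_add_cancel]

lemma abs_mul_phiY_true {p : ℝ} (hp0 : 0 < p) : |p * phiY p true| = √(p * (1 - p)) := by
  rw [phiY, if_pos rfl, mul_neg, abs_neg, mul_sqrt_div_eq_sqrt_mul hp0,
    abs_of_nonneg (Real.sqrt_nonneg _)]

section Scopes

variable {n k : ℕ}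

lemma walshCoeff_empty_of_supportsUniform {t : ℕ} {P : (Fin k → Bool) → Bool}
    {ηP : (Fin k → Bool) → ℝ} (hP : SupportsUniform k t P ηP) : walshCoeff ηP ∅ = 1 := by
  simpa [walshCoeff] using hP.2.1

lemma walshCoeff_eq_zero_of_supportsUniform {t : ℕ} {P : (Fin k → Bool) → Bool}
    {ηP : (Fin k → Bool) → ℝ} (hP : SupportsUniform k t P ηP) (htk : t ≤ k)
    {T : Finset (Fin k)} (hT : T ≠ ∅) (hcard : T.card < t) : walshCoeff ηP T = 0 := by
  obtain ⟨T', hTT', -, hT'⟩ := Finset.exists_subsuperset_card_eq T.subset_univ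
    (Nat.le_sub_one_of_lt hcard) (by simp; omega)
  refine walshCoeff_eq_zero_of_marginal_const hTT' hT ((1 / 2) ^ (t - 1)) fun a => ?_
  convert hP.2.2.2 T' hT' a using 4
  rw [Fintype.card_fin]

def coordsOf (γ : Finset (Scope n k × Fin k)) (S : Scope n k) : Finset (Fin k) :=
  {j | (S, j) ∈ γ}

lemma mem_scopesOf_iff {γ : Finset (Scope n k × Fin k)} {S : Scope n k} :
    S ∈ scopesOf n k γ ↔ coordsOf γ S ≠ ∅ := by
  simp [scopesOf, coordsOf, Finset.eq_empty_iff_forall_notMem]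

lemma card_coordsOf (γ : Finset (Scope n k × Fin k)) (S : Scope n k) :
    (coordsOf γ S).card = (γ.filter fun e => e.1 = S).card :=
  Finset.card_nbij' (fun j => (S, j)) Prod.snd (by intro j; simp [coordsOf])
    (by rintro ⟨S', j⟩ h; obtain ⟨h, rfl⟩ := Finset.mem_filter.mp h; simpa [coordsOf])
    (by intro j; simp) (by rintro ⟨S', j⟩; simp +contextual)

lemma prod_eq_prod_coordsOf (γ : Finset (Scope n k × Fin k)) (f : Scope n k × Fin k → ℝ) :
    ∏ e ∈ γ, f e = ∏ S, ∏ j ∈ coordsOf γ S, f (S, j) :=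
  Finset.prod_finset_product _ _ _ fun e => by simp [coordsOf]

lemma sum_chiF_mul_prod_sgn (α : Finset (Fin n)) (γ : Finset (Scope n k × Fin k)) :
    (1 / 2) ^ n * ∑ x : Assign n, chiF n α x * ∏ e ∈ γ, sgn (x (e.1.1 e.2))
      = if derives n k γ α then 1 else 0 := by
  have hfactor : ∀ x : Assign n, chiF n α x * ∏ e ∈ γ, sgn (x (e.1.1 e.2))
      = ∏ i, sgn (x i) ^ ((if i ∈ α then 1 else 0) + (γ.filter fun e => e.1.1 e.2 = i).card) := by
    intro x
    rw [chiF, prod_sgn_eq_prod_pow, ← Finset.prod_fiberwise γ (fun e => e.1.1 e.2)]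
    simp_rw [pow_add, Finset.prod_mul_distrib]
    congr 1
    exact Finset.prod_congr rfl fun i _ => Finset.prod_eq_pow_card fun e he => by
      rw [(Finset.mem_filter.mp he).2]
  have hparity : ∀ i, Even ((if i ∈ α then 1 else 0) + (γ.filter fun e => e.1.1 e.2 = i).card)
      ↔ (i ∈ α ↔ Odd (γ.filter fun e => e.1.1 e.2 = i).card) := by
    intro i
    split_ifs with hi <;> simp [hi, Nat.even_add, Nat.not_even_iff_odd]
  simp_rw [hfactor, sum_prod_sgn_pow, hparity, Fintype.card_fin, derives]
  split_ifs with h <;> simp [h]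

end Scopes

noncomputable section ScopeFactor

variable {n k : ℕ} (p : ℝ) (ηP : (Fin k → Bool) → ℝ) (β : Finset (Scope n k))
  (γ : Finset (Scope n k × Fin k))

def phiAt (S : Scope n k) (v : Bool) : ℝ := if S ∈ β then phiY p v else 1

def scopeTerm (x : Assign n) (S : Scope n k) (v : Bool) (c : Fin k → Bool) : ℝ :=
  (if v then p * (ηP (fun j => xor (c j) (x (S.1 j))) * (1 / 2) ^ k) else (1 - p) * (1 / 2) ^ k)
    * phiAt p β S v * ∏ j ∈ coordsOf γ S, sgn (c j)

def scopeCoeff (S : Scope n k) : ℝ :=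
  p * phiAt p β S true * walshCoeff ηP (coordsOf γ S)
    + (1 - p) * phiAt p β S false * walshCoeff (fun _ => 1) (coordsOf γ S)

lemma plantedMass_mul_characters (α : Finset (Fin n)) (x : Assign n) (y : Scope n k → Bool)
    (b : Scope n k → Fin k → Bool) :
    plantedMass n k p ηP (x, (y, b)) * chiF n α x * phiF n k p β y * psiF n k γ b
      = (1 / 2) ^ n * chiF n α x * ∏ S, scopeTerm p ηP β γ x S (y S) (b S) := by
  have hphi : phiF n k p β y = ∏ S, phiAt p β S (y S) := by
    simp [phiF, phiAt, Finset.prod_ite_mem]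
  rw [plantedMass, hphi, psiF, prod_eq_prod_coordsOf γ fun e => sgn (b e.1 e.2)]
  simp only [scopeTerm, Finset.prod_mul_distrib]
  unfold litBits
  ring

lemma muHat_eq_sum_prod_scopeTerm (α : Finset (Fin n)) :
    muHat n k p ηP α β γ
      = (1 / 2) ^ n * ∑ x, chiF n α x * ∏ S, ∑ v, ∑ c, scopeTerm p ηP β γ x S v c := by
  simp_rw [muHat, Fintype.sum_prod_type, plantedMass_mul_characters, mul_assoc,
    ← Finset.mul_sum, sum_sum_prod_apply]

lemma sum_scopeTerm (x : Assign n) (S : Scope n k) :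
    ∑ v, ∑ c, scopeTerm p ηP β γ x S v c
      = scopeCoeff p ηP β γ S * ∏ j ∈ coordsOf γ S, sgn (x (S.1 j)) := by
  have hsum : ∀ v, ∑ c, scopeTerm p ηP β γ x S v c
      = (if v then p else 1 - p) * phiAt p β S v
          * walshCoeff (fun c => if v then ηP (fun j => xor (c j) (x (S.1 j))) else 1)
              (coordsOf γ S) := by
    intro v
    simp only [scopeTerm, walshCoeff, Fintype.card_fin, Finset.mul_sum]
    refine Finset.sum_congr rfl fun c _ => ?_
    cases v <;> simp only [↓reduceIte, Bool.false_eq_true] <;> ring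
  have hone := walshCoeff_comp_xor (fun _ => (1 : ℝ)) (fun j => x (S.1 j)) (coordsOf γ S)
  rw [Fintype.sum_bool, hsum, hsum]
  simp only [↓reduceIte, Bool.false_eq_true]
  rw [walshCoeff_comp_xor, hone, scopeCoeff]
  ring

theorem muHat_eq_ite_mul_prod_scopeCoeff (α : Finset (Fin n)) :
    muHat n k p ηP α β γ
      = (if derives n k γ α then 1 else 0) * ∏ S, scopeCoeff p ηP β γ S := by
  simp_rw [muHat_eq_sum_prod_scopeTerm, sum_scopeTerm, Finset.prod_mul_distrib]
  rw [← sum_chiF_mul_prod_sgn α γ]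
  simp_rw [prod_eq_prod_coordsOf γ, Finset.mul_sum, Finset.sum_mul]
  exact Finset.sum_congr rfl fun x _ => by ring

end ScopeFactor

section ScopeCoeff

variable {n k : ℕ} {p : ℝ} {ηP : (Fin k → Bool) → ℝ} {β : Finset (Scope n k)}
  {γ : Finset (Scope n k × Fin k)} {S : Scope n k}

lemma scopeCoeff_of_mem_scopesOf (hS : S ∈ scopesOf n k γ) :
    scopeCoeff p ηP β γ S = p * phiAt p β S true * walshCoeff ηP (coordsOf γ S) := by
  rw [scopeCoeff, walshCoeff_one, if_neg (mem_scopesOf_iff.mp hS), mul_zero, add_zero]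

lemma scopeCoeff_of_notMem_scopesOf (hp0 : 0 < p) (hp1 : p < 1) (hη : walshCoeff ηP ∅ = 1)
    (hS : S ∉ scopesOf n k γ) : scopeCoeff p ηP β γ S = if S ∈ β then 0 else 1 := by
  rw [mem_scopesOf_iff, not_not] at hS
  rw [scopeCoeff, walshCoeff_one, hS, hη, if_pos rfl, phiAt, phiAt]
  split_ifs
  · linear_combination phiY_weighted_sum_eq_zero hp0 hp1
  · ring

lemma abs_scopeCoeff_le (hp0 : 0 < p) (hp1 : p < 1) (hη0 : ∀ z, 0 ≤ ηP z)
    (hη : walshCoeff ηP ∅ = 1) (S : Scope n k) :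
    |scopeCoeff p ηP β γ S|
      ≤ if S ∈ scopesOf n k γ then (if S ∈ β then √(p * (1 - p)) else p) else 1 := by
  have hwalsh := abs_walshCoeff_le hη0 (coordsOf γ S)
  rw [hη] at hwalsh
  split_ifs with hS hβ
  · rw [scopeCoeff_of_mem_scopesOf hS, phiAt, if_pos hβ, abs_mul, abs_mul_phiY_true hp0]
    exact mul_le_of_le_one_right (Real.sqrt_nonneg _) hwalsh
  · rw [scopeCoeff_of_mem_scopesOf hS, phiAt, if_neg hβ, mul_one, abs_mul, abs_of_pos hp0]
    exact mul_le_of_le_one_right hp0.le hwalsh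
  · rw [scopeCoeff_of_notMem_scopesOf hp0 hp1 hη hS]
    split_ifs <;> simp

lemma abs_prod_scopeCoeff_le (hp0 : 0 < p) (hp1 : p < 1) (hη0 : ∀ z, 0 ≤ ηP z)
    (hη : walshCoeff ηP ∅ = 1) :
    |∏ S, scopeCoeff p ηP β γ S|
      ≤ √(p * (1 - p)) ^ (scopesOf n k γ ∩ β).card * p ^ (scopesOf n k γ \ β).card := by
  rw [Finset.abs_prod]
  refine (Finset.prod_le_prod (fun S _ => abs_nonneg _)
    fun S _ => abs_scopeCoeff_le hp0 hp1 hη0 hη S).trans_eq ?_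
  rw [Finset.prod_ite_mem, Finset.univ_inter, Finset.prod_ite, Finset.filter_mem_eq_inter,
    Finset.filter_notMem_eq_sdiff, Finset.prod_const, Finset.prod_const]

lemma prod_scopeCoeff_eq_zero_of_not_subset (hp0 : 0 < p) (hp1 : p < 1)
    (hη : walshCoeff ηP ∅ = 1) (h : ¬β ⊆ scopesOf n k γ) : ∏ S, scopeCoeff p ηP β γ S = 0 := by
  obtain ⟨S, hSβ, hSγ⟩ := Finset.not_subset.mp h
  refine Finset.prod_eq_zero (Finset.mem_univ S) ?_
  rw [scopeCoeff_of_notMem_scopesOf hp0 hp1 hη hSγ, if_pos hSβ]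

lemma prod_scopeCoeff_eq_zero_of_not_arityGE {t : ℕ} {P : (Fin k → Bool) → Bool}
    (hP : SupportsUniform k t P ηP) (htk : t ≤ k) (h : ¬arityGE n k γ t) :
    ∏ S, scopeCoeff p ηP β γ S = 0 := by
  simp only [arityGE, not_forall, not_le] at h
  obtain ⟨S, hS, hlt⟩ := h
  refine Finset.prod_eq_zero (Finset.mem_univ S) ?_
  rw [scopeCoeff_of_mem_scopesOf hS, walshCoeff_eq_zero_of_supportsUniform hP htk
    (mem_scopesOf_iff.mp hS) (by rwa [card_coordsOf]), mul_zero]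

end ScopeCoeff

theorem muHat_bounds_general (n k t : ℕ) (htk : t ≤ k)
    (P : (Fin k → Bool) → Bool) (ηP : (Fin k → Bool) → ℝ)
    (hP : SupportsUniform k t P ηP)
    (p : ℝ) (hp0 : 0 < p) (hp1 : p < 1)
    (α : Finset (Fin n)) (β : Finset (Scope n k)) (γ : Finset (Scope n k × Fin k)) :
    (derives n k γ α ∧ arityGE n k γ t ∧ β ⊆ scopesOf n k γ →
      |muHat n k p ηP α β γ|
        ≤ Real.sqrt (p * (1 - p)) ^ (scopesOf n k γ ∩ β).card
            * p ^ (scopesOf n k γ \ β).card) ∧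
    (¬(derives n k γ α ∧ arityGE n k γ t ∧ β ⊆ scopesOf n k γ) →
      muHat n k p ηP α β γ = 0) := by
  have hη := walshCoeff_empty_of_supportsUniform hP
  rw [muHat_eq_ite_mul_prod_scopeCoeff]
  refine ⟨fun _ => ?_, fun h => ?_⟩
  · refine le_trans ?_ (abs_prod_scopeCoeff_le hp0 hp1 hP.1 hη)
    split_ifs <;> simp
  · split_ifs with hd
    · have h' : ¬(arityGE n k γ t ∧ β ⊆ scopesOf n k γ) := fun h' => h ⟨hd, h'⟩
      rcases not_and_or.mp h' with har | hsub
      · rw [prod_scopeCoeff_eq_zero_of_not_arityGE hP htk har, mul_zero]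
      · rw [prod_scopeCoeff_eq_zero_of_not_subset hp0 hp1 hη hsub, mul_zero]
    · rw [zero_mul]

/-- bounds on the Fourier coefficients of the planted density. -/
theorem muHat_bounds (n k t : ℕ) (hk : 2 ≤ k) (ht : 3 ≤ t) (htk : t ≤ k) (hn : k ≤ n)
    (P : (Fin k → Bool) → Bool) (ηP : (Fin k → Bool) → ℝ)
    (hP : SupportsUniform k t P ηP)
    (p : ℝ) (hp0 : 0 < p) (hp1 : p < 1)
    (α : Finset (Fin n)) (β : Finset (Scope n k)) (γ : Finset (Scope n k × Fin k)) :
    (derives n k γ α ∧ arityGE n k γ t ∧ β ⊆ scopesOf n k γ →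
      |muHat n k p ηP α β γ|
        ≤ Real.sqrt (p * (1 - p)) ^ (scopesOf n k γ ∩ β).card
            * p ^ (scopesOf n k γ \ β).card) ∧
    (¬(derives n k γ α ∧ arityGE n k γ t ∧ β ⊆ scopesOf n k γ) →
      muHat n k p ηP α β γ = 0) :=
  muHat_bounds_general n k t htk P ηP hP p hp0 hp1 α β γ

end RandomCSP
end

section
/- There exist constants c > 0 and C > 0 depending only on k and t such that for all n, all α ⊆ [n], and all l ≤ cn/k: the number N_l(α) of pairs (β,γ) with γ ⊢ α, r(γ) ≥ t, β ⊆ γ̄ and |γ̄| = l satisfies N_l(α) ≤ C^l · n^{kl - (tl + |α|)/2} · l^{(tl + |α|)/2 - l}. In particular this bounds the number of Fourier coefficients μ̂*(α,β,γ) ≠ 0 with |γ̄| = l. -/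
open Finset Matrix
open scoped BigOperators Classical

/-!
Listing the `l` scopes of `γ̄` in one of `l!` orders turns `γ` into a filling `x` of the `kl`
slots `(i, j) ↦ Sᵢ(j)` with variables, together with the set of slots marked by `γ` (at least
`tl` of them). A variable outside `α` is marked an even number of times, so it fills at least
two slots or a single unmarked one; hence `x` takes at most `E = kl - (tl + |α|)/2` values
outside `α`. Storing only the first occurrence of each such value and a pointer (into the slots or into `α`)
everywhere else, there are at most `4^(kl) n^E (kl + |α|)^(kl - E)` such pairs, where
`kl + |α| ≤ 3kl ≤ n` lets fresh values be traded for pointers; the `2^l` choices of `β` and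
the division by `l! ≥ (l/e)^l` give the bound.
-/

open scoped Nat

namespace RandomCSP

noncomputable section

section FreshValues

variable {ι β : Type*}

def firstSlot (x : ι → β) (s : ι) : ι :=
  haveI : Nonempty ι := ⟨s⟩
  Function.invFun x (x s)

lemma apply_firstSlot (x : ι → β) (s : ι) : x (firstSlot x s) = x s :=
  haveI : Nonempty ι := ⟨s⟩
  Function.invFun_eq ⟨s, rfl⟩

lemma firstSlot_congr {x : ι → β} {s s' : ι} (h : x s = x s') :
    firstSlot x s = firstSlot x s' := by
  simp only [firstSlot, h]

lemma firstSlot_firstSlot (x : ι → β) (s : ι) : firstSlot x (firstSlot x s) = firstSlot x s :=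
  firstSlot_congr (apply_firstSlot x s)

/-- Only the first occurrence of each value outside `A` stores that value; every other slot
stores its value in `A` or points to the first occurrence of its value, so decoding needs
no recursion. -/
def slotCode [DecidableEq ι] [DecidableEq β] (A : Finset β) (x : ι → β) (s : ι) :
    β ⊕ (ι ⊕ A) :=
  if h : x s ∈ A then .inr (.inr ⟨x s, h⟩)
  else if firstSlot x s = s then .inl (x s)
  else .inr (.inl (firstSlot x s))

def slotDecode {A : Finset β} (b : β) (c : ι → β ⊕ (ι ⊕ A)) (s : ι) : β :=
  match c s with
  | .inl v => v
  | .inr (.inr a) => a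
  | .inr (.inl s') => (c s').elim id fun _ => b

lemma slotDecode_slotCode [DecidableEq ι] [DecidableEq β] (A : Finset β) (b : β)
    (x : ι → β) : slotDecode b (slotCode A x) = x := by
  funext s
  unfold slotDecode
  by_cases h : x s ∈ A
  · simp [slotCode, h]
  by_cases hs : firstSlot x s = s
  · simp [slotCode, h, hs]
  have hcode : slotCode A x s = .inr (.inl (firstSlot x s)) := by simp [slotCode, h, hs]
  have hfirst : slotCode A x (firstSlot x s) = .inl (x s) := by
    simp [slotCode, apply_firstSlot, firstSlot_firstSlot, h]
  simp only [hcode, hfirst, Sum.elim_inl, id]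

lemma slotCode_injective [DecidableEq ι] [DecidableEq β] (A : Finset β) :
    Function.Injective (slotCode (ι := ι) A) := by
  intro x y h
  funext s
  have := congrFun (congrArg (slotDecode (x s)) h) s
  rwa [slotDecode_slotCode, slotDecode_slotCode] at this

def freshSlots [Fintype ι] [DecidableEq ι] [DecidableEq β] (A : Finset β) (x : ι → β) :
    Finset ι :=
  {s | x s ∉ A ∧ firstSlot x s = s}

lemma card_freshSlots [Fintype ι] [DecidableEq ι] [DecidableEq β] (A : Finset β)
    (x : ι → β) : #(freshSlots A x) = #(univ.image x \ A) := by
  have himage : (freshSlots A x).image x = univ.image x \ A := by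
    ext v
    simp only [freshSlots, mem_image, mem_filter, mem_univ, true_and, mem_sdiff]
    constructor
    · rintro ⟨s, ⟨hs, -⟩, rfl⟩
      exact ⟨⟨s, rfl⟩, hs⟩
    · rintro ⟨⟨s, rfl⟩, hs⟩
      exact ⟨firstSlot x s, ⟨by rwa [apply_firstSlot x s], firstSlot_firstSlot x s⟩,
        apply_firstSlot x s⟩
  rw [← himage, card_image_of_injOn]
  intro s hs s' hs' h
  simp only [freshSlots, coe_filter, mem_univ, true_and, Set.mem_ofPred_eq] at hs hs'
  rw [← hs.2, ← hs'.2, firstSlot_congr h]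

def slotCodes [Fintype ι] [Fintype β] [DecidableEq ι] (A : Finset β) (S : Finset ι) :
    Finset (ι → β ⊕ (ι ⊕ A)) :=
  Fintype.piFinset fun s => if s ∈ S then univ.map .inl else univ.map .inr

lemma card_slotCodes [Fintype ι] [Fintype β] [DecidableEq ι] (A : Finset β) (S : Finset ι) :
    #(slotCodes A S) = Fintype.card β ^ #S * (Fintype.card ι + #A) ^ (Fintype.card ι - #S) := by
  rw [slotCodes, Fintype.card_piFinset]
  simp only [apply_ite Finset.card, card_map, card_univ, Fintype.card_sum, Fintype.card_coe]
  rw [prod_ite, prod_const, prod_const, filter_not, filter_mem_eq_inter, univ_inter,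
    ← compl_eq_univ_sdiff, card_compl]

lemma slotCode_mem_slotCodes [Fintype ι] [Fintype β] [DecidableEq ι] [DecidableEq β]
    (A : Finset β) (x : ι → β) : slotCode A x ∈ slotCodes A (freshSlots A x) := by
  simp only [slotCodes, Fintype.mem_piFinset]
  intro s
  unfold slotCode
  split_ifs <;> simp_all [freshSlots]

lemma card_filter_card_image_sdiff_eq_le [Fintype ι] [Fintype β] [DecidableEq ι]
    [DecidableEq β] (A : Finset β) (j : ℕ) :
    #{x : ι → β | #(univ.image x \ A) = j}
      ≤ (Fintype.card ι).choose j * Fintype.card β ^ j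
          * (Fintype.card ι + #A) ^ (Fintype.card ι - j) := by
  calc #{x : ι → β | #(univ.image x \ A) = j}
      ≤ #((powersetCard j univ).biUnion (slotCodes A)) := by
        refine card_le_card_of_injOn (slotCode A) (fun x hx => ?_)
          (slotCode_injective A).injOn
        simp only [coe_filter, mem_univ, true_and, Set.mem_ofPred_eq] at hx
        exact mem_biUnion.2 ⟨freshSlots A x, by simp [card_freshSlots, hx],
          slotCode_mem_slotCodes A x⟩
    _ ≤ ∑ S ∈ powersetCard j univ, #(slotCodes A S) := card_biUnion_le
    _ = _ := by
        rw [sum_congr rfl fun S hS => by rw [card_slotCodes, (mem_powersetCard.1 hS).2],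
          sum_const, card_powersetCard, card_univ, smul_eq_mul, mul_assoc]

lemma card_filter_le_sum_choose [Fintype ι] [Fintype β] [DecidableEq ι] [DecidableEq β]
    (A : Finset β) (P : ℕ → Prop) [DecidablePred P] :
    #{x : ι → β | P #(univ.image x \ A)}
      ≤ ∑ j ∈ range (Fintype.card ι + 1) with P j, (Fintype.card ι).choose j
          * Fintype.card β ^ j * (Fintype.card ι + #A) ^ (Fintype.card ι - j) := by
  rw [card_eq_sum_card_fiberwise (f := fun x => #(univ.image x \ A))
    (t := {j ∈ range (Fintype.card ι + 1) | P j})]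
  · refine sum_le_sum fun j _ => (card_le_card ?_).trans (card_filter_card_image_sdiff_eq_le A j)
    intro x hx
    simp only [mem_filter, mem_univ, true_and] at hx ⊢
    exact hx.2
  · intro x hx
    simp only [coe_filter, mem_univ, true_and, Set.mem_ofPred_eq, mem_range] at hx ⊢
    refine ⟨Nat.lt_succ_of_le ?_, hx⟩
    exact (card_le_card sdiff_subset).trans (card_image_le.trans_eq card_univ)

/-- A value marked an odd number of times lies in `A`; any other value taken by `x` fills at
least two slots, or a single unmarked one. -/
lemma two_mul_card_image_sdiff_add_le [Fintype ι] [Fintype β] [DecidableEq β] (x : ι → β)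
    (G : Finset ι) (A : Finset β) (hA : ∀ v, v ∈ A ↔ Odd #{s ∈ G | x s = v}) :
    2 * #(univ.image x \ A) + #G + #A ≤ 2 * Fintype.card ι := by
  have hv : ∀ v, 2 * (if v ∈ univ.image x \ A then 1 else 0) + #{s ∈ G | x s = v}
      + (if v ∈ A then 1 else 0) ≤ 2 * #{s | x s = v} := by
    intro v
    have hle : #{s ∈ G | x s = v} ≤ #{s | x s = v} :=
      card_le_card (filter_subset_filter _ (subset_univ G))
    have himage : v ∈ univ.image x ↔ 0 < #{s | x s = v} := by
      simp [card_pos, Finset.Nonempty]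
    by_cases h : v ∈ A
    · obtain ⟨r, hr⟩ := (hA v).1 h
      simp only [mem_sdiff, h, not_true_eq_false, and_false, if_false, if_true]
      omega
    · obtain ⟨r, hr⟩ := Nat.not_odd_iff_even.1 (mt (hA v).2 h)
      by_cases hx : v ∈ univ.image x
      · simp only [mem_sdiff, h, hx, not_false_eq_true, and_self, if_true, if_false]
        have := himage.1 hx
        omega
      · simp only [mem_sdiff, h, hx, false_and, if_false]
        have := himage.not.1 hx
        omega
  calc 2 * #(univ.image x \ A) + #G + #A
      = ∑ v, (2 * (if v ∈ univ.image x \ A then 1 else 0) + #{s ∈ G | x s = v}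
          + (if v ∈ A then 1 else 0)) := by
        rw [sum_add_distrib, sum_add_distrib, ← mul_sum, sum_boole, sum_boole,
          ← card_eq_sum_card_fiberwise fun s _ => mem_univ (x s), filter_mem_eq_inter,
          filter_mem_eq_inter, univ_inter, univ_inter, Nat.cast_id, Nat.cast_id]
    _ ≤ ∑ v, 2 * #{s | x s = v} := sum_le_sum fun v _ => hv v
    _ = 2 * Fintype.card ι := by
        rw [← mul_sum, ← card_eq_sum_card_fiberwise fun s _ => mem_univ (x s), card_univ]

end FreshValues

section Enumerations

variable {σ : Type*} [Fintype σ]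

def enumerations (V : Finset σ) (l : ℕ) : Finset (Fin l → σ) :=
  {L | Function.Injective L ∧ ∀ i, L i ∈ V}

lemma mem_enumerations {V : Finset σ} {l : ℕ} {L : Fin l → σ} :
    L ∈ enumerations V l ↔ Function.Injective L ∧ ∀ i, L i ∈ V := by
  simp [enumerations]

lemma card_enumerations (V : Finset σ) (l : ℕ) :
    #(enumerations V l) = (#V).descFactorial l := by
  have h : enumerations V l =
      univ.map ⟨fun e : Fin l ↪ V => (↑) ∘ e, fun e e' h => by
        ext i; exact congrFun h i⟩ := by
    ext L
    simp only [mem_enumerations, mem_map, mem_univ, true_and]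
    constructor
    · rintro ⟨hL, hV⟩
      exact ⟨⟨fun i => ⟨L i, hV i⟩, fun i i' h => hL (congrArg Subtype.val h)⟩, rfl⟩
    · rintro ⟨e, rfl⟩
      exact ⟨Subtype.val_injective.comp e.injective, fun i => (e i).2⟩
  rw [h, card_map, card_univ, Fintype.card_embedding_eq, Fintype.card_fin, Fintype.card_coe]

end Enumerations

variable {n k t l : ℕ}

lemma mem_scopesOf_of_mem {γ : Finset (Scope n k × Fin k)} {e : Scope n k × Fin k}
    (he : e ∈ γ) : e.1 ∈ scopesOf n k γ :=
  mem_image_of_mem _ he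

lemma arityGE.mul_card_scopesOf_le {γ : Finset (Scope n k × Fin k)} (h : arityGE n k γ t) :
    t * #(scopesOf n k γ) ≤ #γ := by
  rw [card_eq_sum_card_fiberwise fun e he => mem_scopesOf_of_mem he, mul_comm, ← smul_eq_mul,
    ← sum_const]
  exact sum_le_sum h

def admissible (n k t : ℕ) (α : Finset (Fin n)) (l : ℕ) :
    Finset (Finset (Scope n k × Fin k)) :=
  {γ | derives n k γ α ∧ arityGE n k γ t ∧ #(scopesOf n k γ) = l}

lemma Ncount_le_two_pow_mul_card_admissible (α : Finset (Fin n)) :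
    Ncount n k t α l ≤ 2 ^ l * #(admissible n k t α l) := by
  calc Ncount n k t α l
      ≤ #((admissible n k t α l).biUnion fun γ => (scopesOf n k γ).powerset ×ˢ {γ}) := by
        refine card_le_card fun p hp => ?_
        simp only [mem_filter, mem_univ, true_and] at hp
        exact mem_biUnion.2 ⟨p.2, by simp [admissible, hp.1, hp.2.1, hp.2.2.2],
          mem_product.2 ⟨mem_powerset.2 hp.2.2.1, mem_singleton_self _⟩⟩
    _ ≤ ∑ γ ∈ admissible n k t α l, #((scopesOf n k γ).powerset ×ˢ {γ}) :=
        card_biUnion_le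
    _ = 2 ^ l * #(admissible n k t α l) := by
        rw [sum_congr rfl fun γ hγ => by
          rw [card_product, card_powerset, card_singleton, mul_one, (mem_filter.1 hγ).2.2.2],
          sum_const, smul_eq_mul, mul_comm]

def slotEdge (L : Fin l → Scope n k) (s : Fin l × Fin k) : Scope n k × Fin k :=
  (L s.1, s.2)

def slotVar (L : Fin l → Scope n k) (s : Fin l × Fin k) : Fin n :=
  (L s.1).1 s.2

def markedSlots (γ : Finset (Scope n k × Fin k)) (L : Fin l → Scope n k) :
    Finset (Fin l × Fin k) :=
  {s | slotEdge L s ∈ γ}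

lemma slotEdge_injective {L : Fin l → Scope n k} (hL : Function.Injective L) :
    Function.Injective (slotEdge L) := by
  rintro ⟨i, j⟩ ⟨i', j'⟩ h
  simp only [slotEdge, Prod.mk.injEq] at h
  rw [hL h.1, h.2]

lemma map_markedSlots {γ : Finset (Scope n k × Fin k)} {L : Fin l → Scope n k}
    (hL : L ∈ enumerations (scopesOf n k γ) l) (hcard : #(scopesOf n k γ) = l) :
    (markedSlots γ L).map ⟨slotEdge L, slotEdge_injective (mem_enumerations.1 hL).1⟩ = γ := by
  obtain ⟨hinj, hmem⟩ := mem_enumerations.1 hL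
  have hrange : univ.image L = scopesOf n k γ :=
    eq_of_subset_of_card_le (image_subset_iff.2 fun i _ => hmem i)
      (by rw [hcard, card_image_of_injective _ hinj, card_univ, Fintype.card_fin])
  ext e
  simp only [markedSlots, mem_map, mem_filter, mem_univ, true_and,
    Function.Embedding.coeFn_mk]
  constructor
  · rintro ⟨s, hs, rfl⟩
    exact hs
  · intro he
    obtain ⟨i, -, hi⟩ := mem_image.1 (hrange ▸ mem_scopesOf_of_mem he)
    exact ⟨(i, e.2), by simpa [slotEdge, hi] using he, by simp [slotEdge, hi]⟩

lemma two_mul_card_image_slotVar_sdiff_add_le {α : Finset (Fin n)}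
    {γ : Finset (Scope n k × Fin k)} (hγ : γ ∈ admissible n k t α l)
    {L : Fin l → Scope n k} (hL : L ∈ enumerations (scopesOf n k γ) l) :
    2 * #(univ.image (slotVar L) \ α) + t * l + #α ≤ 2 * (l * k) := by
  obtain ⟨hder, har, hcard⟩ := (mem_filter.1 hγ).2
  have hmap := map_markedSlots hL hcard
  have hfiber : ∀ v,
      #{e ∈ γ | e.1.1 e.2 = v} = #{s ∈ markedSlots γ L | slotVar L s = v} := by
    intro v
    conv_lhs => rw [← hmap]
    rw [filter_map, card_map]
    rfl
  have hslots := two_mul_card_image_sdiff_add_le (slotVar L) (markedSlots γ L) α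
    fun v => (hder v).trans (by rw [hfiber])
  have harity := har.mul_card_scopesOf_le
  have hG : #γ = #(markedSlots γ L) := by
    conv_lhs => rw [← hmap]
    exact card_map _
  rw [hcard, hG] at harity
  simp only [Fintype.card_prod, Fintype.card_fin] at hslots
  omega

lemma card_admissible_mul_factorial_le (α : Finset (Fin n)) :
    #(admissible n k t α l) * l !
      ≤ 2 ^ (l * k) * #{x : Fin l × Fin k → Fin n |
          2 * #(univ.image x \ α) + t * l + #α ≤ 2 * (l * k)} := by
  set Γ := admissible n k t α l
  calc #Γ * l ! = #(Γ.sigma fun γ => enumerations (scopesOf n k γ) l) := by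
        rw [card_sigma, sum_congr rfl fun γ hγ => by
          rw [card_enumerations, (mem_filter.1 hγ).2.2.2, Nat.descFactorial_self],
          sum_const, smul_eq_mul]
    _ ≤ #(({x : Fin l × Fin k → Fin n | 2 * #(univ.image x \ α) + t * l + #α ≤ 2 * (l * k)}
          : Finset _) ×ˢ (univ : Finset (Finset (Fin l × Fin k)))) := by
        refine card_le_card_of_injOn (fun p => (slotVar p.2, markedSlots p.1 p.2)) ?_ ?_
        · rintro ⟨γ, L⟩ h
          rw [coe_sigma, Set.mem_sigma_iff] at h
          simpa using two_mul_card_image_slotVar_sdiff_add_le h.1 h.2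
        · rintro ⟨γ, L⟩ h ⟨γ', L'⟩ h' heq
          simp only [coe_sigma, Set.mem_sigma_iff, mem_coe] at h h'
          simp only [Prod.mk.injEq] at heq
          obtain rfl : L = L' :=
            funext fun i => Subtype.ext (funext fun j => congrFun heq.1 (i, j))
          obtain rfl : γ = γ' := by
            rw [← map_markedSlots h.2 (mem_filter.1 h.1).2.2.2,
              ← map_markedSlots h'.2 (mem_filter.1 h'.1).2.2.2, heq.2]
          rfl
    _ = _ := by
        rw [card_product, card_univ, Fintype.card_finset, Fintype.card_prod, Fintype.card_fin,
          Fintype.card_fin, mul_comm]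

lemma Ncount_mul_factorial_le (α : Finset (Fin n)) :
    Ncount n k t α l * l ! ≤ 2 ^ l * 2 ^ (l * k) *
      ∑ j ∈ range (l * k + 1) with 2 * j + t * l + #α ≤ 2 * (l * k),
        (l * k).choose j * n ^ j * (l * k + #α) ^ (l * k - j) := by
  have hcount := card_filter_le_sum_choose (ι := Fin l × Fin k) (β := Fin n) α
    fun j => 2 * j + t * l + #α ≤ 2 * (l * k)
  simp only [Fintype.card_prod, Fintype.card_fin] at hcount
  calc Ncount n k t α l * l ! ≤ 2 ^ l * (#(admissible n k t α l) * l !) := by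
        rw [← mul_assoc]
        exact Nat.mul_le_mul_right _ (Ncount_le_two_pow_mul_card_admissible α)
    _ ≤ 2 ^ l * (2 ^ (l * k) * _) :=
        Nat.mul_le_mul_left _ (card_admissible_mul_factorial_le α)
    _ ≤ _ := by
        rw [← mul_assoc]
        exact Nat.mul_le_mul_left _ hcount

lemma pow_mul_pow_le_rpow_mul_rpow {a b x y : ℝ} {i j : ℕ} (hb : 0 < b) (hba : b ≤ a)
    (hsum : (i + j : ℝ) = x + y) (hix : (i : ℝ) ≤ x) :
    a ^ i * b ^ j ≤ a ^ x * b ^ y := by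
  have ha : 0 < a := hb.trans_le hba
  have hj : (j : ℝ) = (x - i) + y := by linarith
  calc a ^ i * b ^ j = a ^ (i : ℝ) * b ^ (x - i) * b ^ y := by
        rw [← Real.rpow_natCast b, hj, Real.rpow_add hb, Real.rpow_natCast, mul_assoc]
    _ ≤ a ^ (i : ℝ) * a ^ (x - i) * b ^ y := by
        gcongr
    _ = a ^ x * b ^ y := by rw [← Real.rpow_add ha, add_sub_cancel]

lemma pow_mul_pow_le_of_two_mul_add_le {n k t l a j : ℕ} (hk : 0 < k) (hl : 0 < l)
    (hn : 3 * (k * l) ≤ n) (hj : 2 * j + t * l + a ≤ 2 * (l * k)) :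
    (n : ℝ) ^ j * (l * k + a : ℝ) ^ (l * k - j)
      ≤ (n : ℝ) ^ ((k * l : ℝ) - ((t * l : ℝ) + a) / 2) * (3 * k : ℝ) ^ (l * k)
          * (l : ℝ) ^ (((t * l : ℝ) + a) / 2) := by
  set X : ℝ := ((t * l : ℝ) + a) / 2
  have hjR : (2 * j + t * l + a : ℝ) ≤ 2 * (l * k) := by exact_mod_cast hj
  have hX : X ≤ l * k := by
    have : (0 : ℝ) ≤ j := j.cast_nonneg
    simp only [X]; linarith
  have hjk : j ≤ l * k := by omega
  have hq : (0 : ℝ) < l * k + a := by positivity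
  have hq3 : (l * k + a : ℝ) ≤ 3 * k * l := by
    have : l * k + a ≤ 3 * k * l := by nlinarith
    exact_mod_cast this
  have hqn : (l * k + a : ℝ) ≤ n :=
    hq3.trans (by exact_mod_cast (by linarith : 3 * k * l ≤ n))
  calc (n : ℝ) ^ j * (l * k + a : ℝ) ^ (l * k - j)
      ≤ (n : ℝ) ^ ((k * l : ℝ) - X) * (l * k + a : ℝ) ^ X := by
        refine pow_mul_pow_le_rpow_mul_rpow hq hqn ?_ ?_
        · rw [Nat.cast_sub hjk]; push_cast; ring
        · simp only [X]; linarith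
    _ ≤ (n : ℝ) ^ ((k * l : ℝ) - X) * ((3 * k : ℝ) ^ X * (l : ℝ) ^ X) := by
        rw [← Real.mul_rpow (by positivity) (by positivity)]
        gcongr
    _ ≤ (n : ℝ) ^ ((k * l : ℝ) - X) * ((3 * k : ℝ) ^ (l * k) * (l : ℝ) ^ X) := by
        gcongr
        rw [← Real.rpow_natCast]
        refine Real.rpow_le_rpow_of_exponent_le ?_ (by exact_mod_cast hX)
        have : (1 : ℝ) ≤ k := by exact_mod_cast hk
        linarith
    _ = _ := by ring

lemma cast_sum_choose_mul_pow_le {n k t l a : ℕ} (hk : 0 < k) (hl : 0 < l)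
    (hn : 3 * (k * l) ≤ n) :
    ((∑ j ∈ range (l * k + 1) with 2 * j + t * l + a ≤ 2 * (l * k),
        (l * k).choose j * n ^ j * (l * k + a) ^ (l * k - j) : ℕ) : ℝ)
      ≤ 2 ^ (l * k) * ((n : ℝ) ^ ((k * l : ℝ) - ((t * l : ℝ) + a) / 2)
          * (3 * k : ℝ) ^ (l * k) * (l : ℝ) ^ (((t * l : ℝ) + a) / 2)) := by
  set B : ℝ := (n : ℝ) ^ ((k * l : ℝ) - ((t * l : ℝ) + a) / 2) * (3 * k : ℝ) ^ (l * k)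
    * (l : ℝ) ^ (((t * l : ℝ) + a) / 2)
  rw [Nat.cast_sum]
  calc _ ≤ ∑ j ∈ range (l * k + 1) with 2 * j + t * l + a ≤ 2 * (l * k),
        ((l * k).choose j : ℝ) * B := by
        refine sum_le_sum fun j hj => ?_
        rw [Nat.cast_mul, Nat.cast_mul, mul_assoc]
        gcongr
        push_cast
        exact pow_mul_pow_le_of_two_mul_add_le hk hl hn (mem_filter.1 hj).2
    _ ≤ ∑ j ∈ range (l * k + 1), ((l * k).choose j : ℝ) * B :=
        sum_le_sum_of_subset_of_nonneg (filter_subset _ _) fun _ _ _ => by positivity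
    _ = 2 ^ (l * k) * B := by
        rw [← sum_mul, ← Nat.cast_sum, Nat.sum_range_choose, Nat.cast_pow, Nat.cast_ofNat]

lemma Ncount_le_of_pos {n k t l : ℕ} (α : Finset (Fin n)) (hk : 0 < k) (hl : 0 < l)
    (hn : 3 * (k * l) ≤ n) :
    (Ncount n k t α l : ℝ)
      ≤ (2 * Real.exp 1 * (12 * k) ^ k) ^ l
          * (n : ℝ) ^ ((k * l : ℝ) - ((t * l : ℝ) + #α) / 2)
          * (l : ℝ) ^ (((t * l : ℝ) + #α) / 2 - l) := by
  set X : ℝ := ((t * l : ℝ) + #α) / 2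
  set B : ℝ := (n : ℝ) ^ ((k * l : ℝ) - X) * (3 * k : ℝ) ^ (l * k) * (l : ℝ) ^ X
  have hcount : (Ncount n k t α l : ℝ) * l ! ≤ 2 ^ l * 2 ^ (l * k) * (2 ^ (l * k) * B) := by
    calc (Ncount n k t α l : ℝ) * l ! = ((Ncount n k t α l * l ! : ℕ) : ℝ) := by
          push_cast; ring
      _ ≤ _ := Nat.cast_le.2 (Ncount_mul_factorial_le α)
      _ ≤ _ := by
          rw [Nat.cast_mul, Nat.cast_mul, Nat.cast_pow, Nat.cast_pow, Nat.cast_ofNat]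
          gcongr
          exact cast_sum_choose_mul_pow_le hk hl hn
  have hfact : (l : ℝ) ^ l / l ! ≤ Real.exp l := Real.pow_div_factorial_le_exp _ l.cast_nonneg l
  have hl' : (0 : ℝ) < l := by exact_mod_cast hl
  calc (Ncount n k t α l : ℝ) ≤ 2 ^ l * 2 ^ (l * k) * (2 ^ (l * k) * B) / l ! := by
        rwa [le_div_iff₀ (by positivity)]
    _ = 2 ^ l * 2 ^ (l * k) * (2 ^ (l * k) * B) * ((l : ℝ) ^ l / l !) / (l : ℝ) ^ l := by
        field_simp
    _ ≤ 2 ^ l * 2 ^ (l * k) * (2 ^ (l * k) * B) * Real.exp l / (l : ℝ) ^ l := by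
        gcongr
    _ = _ := by
        rw [Real.rpow_sub_natCast hl'.ne', ← Real.exp_one_pow,
          show (12 : ℝ) = 2 * 2 * 3 by norm_num]
        simp only [B, mul_pow, ← pow_mul]
        ring

end

theorem Ncount_bound_general (k t : ℕ) (hk : 2 ≤ k) :
    ∃ c : ℝ, 0 < c ∧ ∃ C : ℝ, 0 < C ∧
      ∀ n : ℕ, k ≤ n → ∀ α : Finset (Fin n), ∀ l : ℕ,
        (l : ℝ) ≤ c * n / k →
        (Ncount n k t α l : ℝ)
          ≤ C ^ l * (n : ℝ) ^ ((k * l : ℝ) - ((t * l : ℝ) + α.card) / 2)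
              * (l : ℝ) ^ (((t * l : ℝ) + α.card) / 2 - l) := by
  refine ⟨1 / 3, by norm_num, 2 * Real.exp 1 * (12 * k) ^ k, by positivity,
    fun n _ α l hl => ?_⟩
  have hk0 : 0 < k := by omega
  rcases l.eq_zero_or_pos with rfl | hl0
  · by_cases hα : α = ∅
    · subst hα
      have h : Ncount n k t ∅ 0 ≤ 1 := by
        simpa using Ncount_mul_factorial_le (t := t) (l := 0) ∅
      simpa using (Nat.cast_le (α := ℝ)).2 h
    · have h : Ncount n k t α 0 = 0 := by
        simpa [hα] using Ncount_mul_factorial_le (t := t) (l := 0) α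
      rw [h, Nat.cast_zero]
      positivity
  · have hn : (3 * (k * l) : ℝ) ≤ n := by
      rw [le_div_iff₀ (by positivity)] at hl
      linarith
    exact Ncount_le_of_pos α hk0 hl0 (by exact_mod_cast hn)

/-- counting the nonzero Fourier coefficients with `|γ̄| = l`. -/
theorem Ncount_bound (k t : ℕ) (hk : 2 ≤ k) (ht : 1 ≤ t) (htk : t ≤ k) :
    ∃ c : ℝ, 0 < c ∧ ∃ C : ℝ, 0 < C ∧
      ∀ n : ℕ, k ≤ n → ∀ α : Finset (Fin n), ∀ l : ℕ,
        (l : ℝ) ≤ c * n / k →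
        (Ncount n k t α l : ℝ)
          ≤ C ^ l * (n : ℝ) ^ ((k * l : ℝ) - ((t * l : ℝ) + α.card) / 2)
              * (l : ℝ) ^ (((t * l : ℝ) + α.card) / 2 - l) :=
  Ncount_bound_general k t hk

end RandomCSP
end
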